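/- Let ρ be a density matrix on ℂᵐ and P an orthogonal projector on ℂᵐ, and set δ = 1 − tr(Pρ) (a real number in [0,1]). Then ‖ ρ − PρP ‖₁ ≤ √(δ(4 − 3δ)). -/

import Mathlib

open scoped Matrix ComplexOrder

noncomputable def traceNorm {m n : Type*} [Fintype m] [Fintype n] [DecidableEq n]
    (A : Matrix m n ℂ) : ℝ :=
  ((Matrix.posSemidef_conjTranspose_mul_self A).1.eigenvectorUnitary.1 *
    Matrix.diagonal (((↑) : ℝ → ℂ) ∘ (√·) ∘ (Matrix.posSemidef_conjTranspose_mul_self A).1.eigenvalues) *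
    (star (Matrix.posSemidef_conjTranspose_mul_self A).1.eigenvectorUnitary : Matrix n n ℂ)).trace.re

/-!
Let `X = ρ - PρP`, a Hermitian matrix with `tr X = δ`. If `M` is the spectral projector of `X`
onto its negative eigenvalues, then `‖X‖₁ = tr X - 2 tr(MX) = δ - 2 tr(ρ(M - PMP))`.
For every real `a`, with `Q = 1 - P`, the matrix `a(M - PMP) + a²P + ((1-a)/2)²Q` equals
`TT† + SS†` for `T = aP + QMP` and `S = QMQ - ((1-a)/2)Q`, so it is positive semidefinite;
pairing it with `ρ` gives `2a‖X‖₁ ≤ a²(4 - 3δ) + δ`, and `a = ‖X‖₁ / (4 - 3δ)` yields the bound.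
-/

theorem le_sqrt_of_forall_two_mul_le {x c d : ℝ} (hc : 0 < c)
    (h : ∀ a, 2 * a * x ≤ a ^ 2 * c + d) : x ≤ √(d * c) := by
  rcases le_or_gt x 0 with hx | hx
  · exact hx.trans (Real.sqrt_nonneg _)
  refine Real.le_sqrt_of_sq_le ?_
  have := h (x / c)
  field_simp at this
  nlinarith

namespace Matrix

variable {n : Type*} [Fintype n] [DecidableEq n]

theorem traceNorm_eq_re_trace_cfc_sqrt {m : Type*} [Fintype m] (A : Matrix m n ℂ) :
    traceNorm A = (cfc Real.sqrt (Aᴴ * A)).trace.re := by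
  rw [(posSemidef_conjTranspose_mul_self A).1.cfc_eq]
  rfl

theorem IsHermitian.traceNorm_eq_re_trace_cfc_abs {A : Matrix n n ℂ} (hA : A.IsHermitian) :
    traceNorm A = (cfc (fun x : ℝ => |x|) A).trace.re := by
  rw [traceNorm_eq_re_trace_cfc_sqrt, hA.eq, ← sq, ← cfc_comp_pow ..]
  simp only [Real.sqrt_sq_eq_abs]

theorem IsHermitian.exists_isHermitian_idempotent_traceNorm_eq {A : Matrix n n ℂ}
    (hA : A.IsHermitian) :
    ∃ M : Matrix n n ℂ, M.IsHermitian ∧ M * M = M ∧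
      traceNorm A = A.trace.re - 2 * (M * A).trace.re := by
  set neg : ℝ → ℝ := fun x => if x < 0 then 1 else 0
  have hneg : ContinuousOn neg (spectrum ℝ A) := A.finite_real_spectrum.continuousOn _
  refine ⟨cfc neg A, (cfc_predicate neg A).isHermitian, ?_, ?_⟩
  · rw [← cfc_mul neg neg A]
    congr 1
    ext x
    by_cases hx : x < 0 <;> simp [neg, hx]
  · have habs : (fun x : ℝ => |x|) = fun x : ℝ => x - 2 * (neg x * x) := by
      ext x
      by_cases hx : x < 0
      · simp [neg, hx, abs_of_neg]; ring
      · simp [neg, hx, abs_of_nonneg (not_lt.mp hx)]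
    rw [hA.traceNorm_eq_re_trace_cfc_abs, habs, cfc_sub .., cfc_const_mul .., cfc_mul ..,
      cfc_id' ℝ A]
    simp [trace_sub, trace_smul]

theorem PosSemidef.trace_mul_nonneg {A B : Matrix n n ℂ} (hA : A.PosSemidef)
    (hB : B.PosSemidef) : 0 ≤ (A * B).trace := by
  open scoped MatrixOrder in
  obtain ⟨C, rfl⟩ := CStarAlgebra.nonneg_iff_eq_star_mul_self.mp hB.nonneg
  rw [← Matrix.mul_assoc, trace_mul_cycle]
  exact (hA.mul_mul_conjTranspose_same C).trace_nonneg

theorem posSemidef_smul_sub_compression_add_smul {P M : Matrix n n ℂ} (hP : P.IsHermitian)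
    (hPP : P * P = P) (hM : M.IsHermitian) (hMM : M * M = M) (a : ℝ) :
    (a • (M - P * M * P) + a ^ 2 • P + ((1 - a) / 2) ^ 2 • (1 - P)).PosSemidef := by
  set Q := 1 - P
  set T := a • P + Q * M * P
  set S := Q * M * Q - ((1 - a) / 2) • Q
  have hQ : Q.IsHermitian := isHermitian_one.sub hP
  have hS : Sᴴ = S := by
    simp [S, conjTranspose_mul, hM.eq, hQ.eq, Matrix.mul_assoc]
  have hT : Tᴴ = a • P + P * M * Q := by
    simp [T, conjTranspose_mul, hP.eq, hM.eq, hQ.eq, Matrix.mul_assoc]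
  suffices h : a • (M - P * M * P) + a ^ 2 • P + ((1 - a) / 2) ^ 2 • Q = T * Tᴴ + S * Sᴴ by
    rw [h]
    exact (posSemidef_self_mul_conjTranspose T).add (posSemidef_self_mul_conjTranspose S)
  have hP2 (Z : Matrix n n ℂ) : P * (P * Z) = P * Z := by rw [← Matrix.mul_assoc, hPP]
  have hM2 (Z : Matrix n n ℂ) : M * (M * Z) = M * Z := by rw [← Matrix.mul_assoc, hMM]
  rw [hT, hS]
  simp only [T, S, Q, Matrix.sub_mul, Matrix.mul_sub, Matrix.add_mul, Matrix.mul_add,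
    smul_mul_assoc, mul_smul_comm, smul_sub, smul_add, smul_smul,
    Matrix.one_mul, Matrix.mul_one, Matrix.mul_assoc, hP2, hM2, hPP, hMM]
  module

end Matrix

open Matrix

/-- For a density matrix `ρ` and an orthogonal projector `P`, with `δ = 1 − tr(Pρ)`,
one has `‖ρ − PρP‖₁ ≤ √(δ(4 − 3δ))`. -/
theorem traceNorm_state_projector_compression
    {m : ℕ} (ρ : Matrix (Fin m) (Fin m) ℂ) (hρ : ρ.PosSemidef) (hρtr : ρ.trace = 1)
    (P : Matrix (Fin m) (Fin m) ℂ) (hPherm : P.IsHermitian) (hPproj : P * P = P) :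
    traceNorm (ρ - P * ρ * P)
      ≤ Real.sqrt ((1 - ((P * ρ).trace).re) * (4 - 3 * (1 - ((P * ρ).trace).re))) := by
  have hPρP : (P * ρ * P).PosSemidef := by
    simpa [hPherm.eq] using hρ.mul_mul_conjTranspose_same P
  obtain ⟨M, hM, hMM, hnorm⟩ := (hρ.1.sub hPρP.1).exists_isHermitian_idempotent_traceNorm_eq
  have htrX : (ρ - P * ρ * P).trace.re = 1 - (P * ρ).trace.re := by
    rw [trace_sub, trace_mul_cycle, hPproj, hρtr, Complex.sub_re, Complex.one_re]
  have htrMX : (M * (ρ - P * ρ * P)).trace = (ρ * (M - P * M * P)).trace := by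
    simp only [Matrix.mul_sub, trace_sub, Matrix.mul_assoc]
    rw [trace_mul_comm M ρ, trace_mul_comm M (P * (ρ * P)), Matrix.mul_assoc P,
      Matrix.mul_assoc ρ, trace_mul_comm P]
    simp only [Matrix.mul_assoc]
  have hPρ : 0 ≤ (P * ρ).trace.re := by
    have hPpsd : P.PosSemidef := by
      simpa [hPherm.eq, hPproj] using posSemidef_conjTranspose_mul_self P
    exact (Complex.nonneg_iff.mp (hPpsd.trace_mul_nonneg hρ)).1
  refine le_sqrt_of_forall_two_mul_le (by linarith) fun a => ?_
  have hW := Complex.nonneg_iff.mp (hρ.trace_mul_nonneg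
    (posSemidef_smul_sub_compression_add_smul hPherm hPproj hM hMM a)) |>.1
  rw [hnorm, htrX, htrMX]
  simp only [Matrix.mul_add, Matrix.mul_sub, mul_smul_comm, trace_add, trace_sub, trace_smul,
    Matrix.mul_one, Complex.add_re, Complex.sub_re, Complex.smul_re, smul_eq_mul, Complex.one_re,
    hρtr, trace_mul_comm ρ P] at hW ⊢
  linarith
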